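/- Let N be a nonnegative integer and let 𝓕 be a finite family of rational pointed 2-dimensional cones. Then, up to integral equivalence, there are only finitely many lattice polygons (2-dimensional lattice polytopes) P ⊆ ℝ^2 with exactly N+1 lattice points such that for every vertex u of P the normal cone of P at u is integrally equivalent to a cone belonging to 𝓕. -/

import Mathlib

open Set MeasureTheory
open scoped ENNReal

/-- A point of `ℝ^n` is a lattice point if all coordinates are integers. -/
def IsLatticePoint {n : ℕ} (x : Fin n → ℝ) : Prop := ∀ i, ∃ z : ℤ, x i = (z : ℝ)

/-- The set of lattice points of `ℝ^n`. -/
def LatticePts (n : ℕ) : Set (Fin n → ℝ) := {x | IsLatticePoint x}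

/-- A lattice polytope: the convex hull of finitely many lattice points. -/
def IsLatticePolytope {n : ℕ} (P : Set (Fin n → ℝ)) : Prop :=
  ∃ V : Set (Fin n → ℝ), V.Finite ∧ V.Nonempty ∧ V ⊆ LatticePts n ∧ P = convexHull ℝ V

/-- The dimension of a polytope: the dimension of its affine hull. -/
noncomputable def polyDim {n : ℕ} (P : Set (Fin n → ℝ)) : ℕ :=
  Module.finrank ℝ (affineSpan ℝ P).direction

/-- The tangent cone of `P` at `u`: the cone spanned by `P - u`. -/
def tangentCone {n : ℕ} (P : Set (Fin n → ℝ)) (u : Fin n → ℝ) : Set (Fin n → ℝ) :=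
  {x | ∃ c : ℝ, 0 ≤ c ∧ ∃ p ∈ P, x = c • (p - u)}

/-- Integral equivalence of lattice polytopes: an affine map between the affine hulls
mapping the lattice points of the affine hulls bijectively onto each other and one
polytope onto the other. -/
def PolyEquiv {n n' : ℕ} (P : Set (Fin n → ℝ)) (P' : Set (Fin n' → ℝ)) : Prop :=
  ∃ f : (Fin n → ℝ) →ᵃ[ℝ] (Fin n' → ℝ),
    Set.BijOn f ((affineSpan ℝ P : Set (Fin n → ℝ)) ∩ LatticePts n)
      ((affineSpan ℝ P' : Set (Fin n' → ℝ)) ∩ LatticePts n') ∧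
    f '' P = P'

/-- The cone generated by finitely many vectors: all nonnegative combinations. -/
def coneGen {n m : ℕ} (v : Fin m → Fin n → ℝ) : Set (Fin n → ℝ) :=
  {x | ∃ c : Fin m → ℝ, (∀ i, 0 ≤ c i) ∧ x = ∑ i, c i • v i}

/-- A rational (polyhedral) cone: generated by finitely many integer vectors. -/
def IsRationalCone {n : ℕ} (σ : Set (Fin n → ℝ)) : Prop :=
  ∃ (m : ℕ) (v : Fin m → Fin n → ℤ), σ = coneGen (fun i j => (v i j : ℝ))

/-- A pointed cone contains no nonzero vector together with its negative. -/
def IsPointedCone {n : ℕ} (σ : Set (Fin n → ℝ)) : Prop :=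
  ∀ x ∈ σ, -x ∈ σ → x = 0

/-- The dimension of a cone: the dimension of its linear span. -/
noncomputable def coneDim {n : ℕ} (σ : Set (Fin n → ℝ)) : ℕ :=
  Module.finrank ℝ (Submodule.span ℝ σ)

/-- Integral equivalence of cones: a linear map from span(σ) to span(σ') mapping the
lattice points of span(σ) bijectively onto the lattice points of span(σ') and σ onto σ'. -/
def ConeEquiv {n n' : ℕ} (σ : Set (Fin n → ℝ)) (σ' : Set (Fin n' → ℝ)) : Prop :=
  ∃ L : (Fin n → ℝ) →ₗ[ℝ] (Fin n' → ℝ),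
    Set.BijOn L ((Submodule.span ℝ σ : Set (Fin n → ℝ)) ∩ LatticePts n)
      ((Submodule.span ℝ σ' : Set (Fin n' → ℝ)) ∩ LatticePts n') ∧
    L '' σ = σ'

/-- The normal cone of `P` at `u`: the dual cone of the tangent cone. -/
def normalCone {n : ℕ} (P : Set (Fin n → ℝ)) (u : Fin n → ℝ) : Set (Fin n → ℝ) :=
  {y | ∀ x ∈ tangentCone P u, 0 ≤ ∑ i, x i * y i}

/-!
Let `p`, `p + u`, `p + v` be lattice points of `P` spanning a triangle of maximal oriented area,
`e = det (u, v) > 0`. The lattice points of this triangle, together with their reflections through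
the midpoint of `[p + u, p + v]`, meet every class of `ℤ² / ⟨u, v⟩`, a group of order `e`; so
`e ≤ 2 (N + 1)`. By maximality, every lattice point `z` of `P` has `|det (u, z - p)| ≤ e` and
`|det (z - p, v)| ≤ e`, and by Cramer's rule these bound the coordinates of `z - p` by `2e` in any
coordinates in which `u` and `v` have entries in `[0, e]`, such as the Hermite normal form of
`(u, v)`. So `P` is integrally equivalent to the convex hull of a subset of a box of side
`8 (N + 1)`, and there are finitely many of those.
-/

open Matrix
open scoped MatrixGroups

namespace LatticePolygon

section Unimodular

variable {n : ℕ}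

def latticePoint (z : Fin n → ℤ) : Fin n → ℝ := fun i => z i

lemma latticePoint_injective : Function.Injective (latticePoint (n := n)) :=
  fun _ _ h => funext fun i => Int.cast_injective (congrFun h i)

lemma latticePoint_sub (a b : Fin n → ℤ) :
    latticePoint (a - b) = latticePoint a - latticePoint b := by
  funext i; simp [latticePoint]

lemma range_latticePoint : range (latticePoint (n := n)) = LatticePts n := by
  ext x
  refine ⟨?_, fun hx => ⟨fun i => (hx i).choose, funext fun i => ((hx i).choose_spec).symm⟩⟩
  rintro ⟨z, rfl⟩ i
  exact ⟨z i, rfl⟩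

lemma ncard_preimage_latticePoint (P : Set (Fin n → ℝ)) :
    (latticePoint ⁻¹' P).ncard = (P ∩ LatticePts n).ncard := by
  rw [← range_latticePoint, ← image_preimage_eq_inter_range,
    ncard_image_of_injective _ latticePoint_injective]

lemma polyEquiv_image {f : (Fin n → ℝ) ≃ᵃ[ℝ] (Fin n → ℝ)} (hf : f '' LatticePts n = LatticePts n)
    (P : Set (Fin n → ℝ)) : PolyEquiv P (f '' P) := by
  refine ⟨f.toAffineMap, ?_, rfl⟩
  have hspan : affineSpan ℝ (f '' P) = (affineSpan ℝ P).map f.toAffineMap := by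
    rw [AffineSubspace.map_span]; rfl
  have hbij := f.injective.injOn.bijOn_image (s := affineSpan ℝ P ∩ LatticePts n)
  rw [image_inter f.injective, hf] at hbij
  rw [hspan, AffineSubspace.coe_map]
  exact hbij

noncomputable def unimodularAffineEquiv (U : SL(n, ℤ)) (t : Fin n → ℤ) :
    (Fin n → ℝ) ≃ᵃ[ℝ] (Fin n → ℝ) :=
  (SpecialLinearGroup.toLin' (SpecialLinearGroup.map (Int.castRingHom ℝ) U)).toAffineEquiv.trans
    (AffineEquiv.constVAdd ℝ _ (latticePoint t))

lemma unimodularAffineEquiv_latticePoint (U : SL(n, ℤ)) (t z : Fin n → ℤ) :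
    unimodularAffineEquiv U t (latticePoint z) = latticePoint (U *ᵥ z + t) := by
  funext i
  simp only [unimodularAffineEquiv, AffineEquiv.trans_apply, LinearEquiv.coe_toAffineEquiv,
    SpecialLinearGroup.toLin'_apply, SpecialLinearGroup.map_apply_coe, RingHom.mapMatrix_apply,
    Int.coe_castRingHom, toLin'_apply, AffineEquiv.constVAdd_apply, Pi.vadd_apply', latticePoint,
    vadd_eq_add, Pi.add_apply, add_comm, Int.cast_add, add_right_inj]
  exact (RingHom.map_mulVec (Int.castRingHom ℝ) _ _ _).symm

lemma image_latticePts_unimodularAffineEquiv (U : SL(n, ℤ)) (t : Fin n → ℤ) :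
    unimodularAffineEquiv U t '' LatticePts n = LatticePts n := by
  have hsurj : Function.Surjective fun z : Fin n → ℤ => U *ᵥ z + t := fun w =>
    ⟨((U⁻¹ : SL(n, ℤ)) : Matrix (Fin n) (Fin n) ℤ) *ᵥ (w - t), by
      simp [mulVec_mulVec, mul_adjugate]⟩
  have hcomp : unimodularAffineEquiv U t ∘ latticePoint = latticePoint ∘ fun z => U *ᵥ z + t :=
    funext (unimodularAffineEquiv_latticePoint U t)
  rw [← range_latticePoint, ← range_comp, hcomp, range_comp, hsurj.range_eq, image_univ]

end Unimodular

section Cross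

variable {R : Type*} [CommRing R]

def cross (a b : Fin 2 → R) : R := a 0 * b 1 - a 1 * b 0

lemma cross_anticomm (a b : Fin 2 → R) : cross a b = -cross b a := by
  simp only [cross]; ring

lemma cross_smul_eq_add (u v w : Fin 2 → R) : cross u v • w = cross w v • u + cross u w • v := by
  funext i; fin_cases i <;> simp [cross] <;> ring

lemma linearIndependent_of_cross_ne_zero {u v : Fin 2 → ℤ} (h : cross u v ≠ 0) :
    LinearIndependent ℤ ![u, v] := by
  refine LinearIndependent.pair_iff.mpr fun s t hst => ?_
  have h0 := congrFun hst 0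
  have h1 := congrFun hst 1
  simp only [Pi.add_apply, Pi.smul_apply, smul_eq_mul, Pi.zero_apply] at h0 h1
  have hs : s * cross u v = 0 := by simp only [cross]; linear_combination v 1 * h0 - v 0 * h1
  have ht : t * cross u v = 0 := by simp only [cross]; linear_combination u 0 * h1 - u 1 * h0
  exact ⟨(mul_eq_zero.mp hs).resolve_right h, (mul_eq_zero.mp ht).resolve_right h⟩

lemma card_quotient_span_pair {u v : Fin 2 → ℤ} (h : cross u v ≠ 0) :
    Nat.card ((Fin 2 → ℤ) ⧸ Submodule.span ℤ {u, v}) = (cross u v).natAbs := by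
  have hb := Submodule.natAbs_det_basis_change (Pi.basisFun ℤ (Fin 2)) _
    (Module.Basis.span (linearIndependent_of_cross_ne_zero h))
  rw [← Matrix.range_cons_cons_empty u v ![], ← hb, Pi.basisFun_det_apply, Matrix.det_fin_two]
  simp [cross]

end Cross

/-- For `0 < cross u v`, the lattice points of the triangle with vertices `0`, `u`, `v`. -/
def latticeTriangle (u v : Fin 2 → ℤ) : Set (Fin 2 → ℤ) :=
  {z | 0 ≤ cross z v ∧ 0 ≤ cross u z ∧ cross z v + cross u z ≤ cross u v}

/-- Reducing `z` modulo `u` and `v` gives a point `w` of the half-open parallelogram spanned by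
them; `w` or its reflection `u + v - w` lies in the triangle. -/
lemma exists_mem_latticeTriangle_sub_or_add_mem_span {u v : Fin 2 → ℤ} (he : 0 < cross u v)
    (z : Fin 2 → ℤ) :
    ∃ w ∈ latticeTriangle u v,
      z - w ∈ Submodule.span ℤ {u, v} ∨ z + w ∈ Submodule.span ℤ {u, v} := by
  set e := cross u v
  set m := cross z v / e
  set k := cross u z / e
  set w := z - m • u - k • v
  have hwv : cross w v = cross z v % e := by
    rw [Int.emod_def]; simp only [w, m, k, e, cross, Pi.sub_apply, Pi.smul_apply, smul_eq_mul]; ring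
  have huw : cross u w = cross u z % e := by
    rw [Int.emod_def]; simp only [w, m, k, e, cross, Pi.sub_apply, Pi.smul_apply, smul_eq_mul]; ring
  have hwv₀ : 0 ≤ cross w v := hwv ▸ Int.emod_nonneg _ he.ne'
  have hwv₁ : cross w v < e := hwv ▸ Int.emod_lt_of_pos _ he
  have huw₀ : 0 ≤ cross u w := huw ▸ Int.emod_nonneg _ he.ne'
  have huw₁ : cross u w < e := huw ▸ Int.emod_lt_of_pos _ he
  by_cases hw : cross w v + cross u w ≤ e
  · refine ⟨w, ⟨hwv₀, huw₀, hw⟩, Or.inl (Submodule.mem_span_pair.mpr ⟨m, k, ?_⟩)⟩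
    simp only [w]; abel
  · have hrv : cross (u + v - w) v = e - cross w v := by
      simp only [e, cross, Pi.sub_apply, Pi.add_apply]; ring
    have hur : cross u (u + v - w) = e - cross u w := by
      simp only [e, cross, Pi.sub_apply, Pi.add_apply]; ring
    refine ⟨u + v - w, ⟨by omega, by omega, by omega⟩,
      Or.inr (Submodule.mem_span_pair.mpr ⟨m + 1, k + 1, ?_⟩)⟩
    simp only [w, add_smul, one_smul]; abel

lemma natAbs_cross_le_two_mul_encard {u v : Fin 2 → ℤ} (he : 0 < cross u v) :
    ((cross u v).natAbs : ℕ∞) ≤ 2 * (latticeTriangle u v).encard := by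
  set H := Submodule.span ℤ {u, v}
  set T := latticeTriangle u v
  have hcard := card_quotient_span_pair he.ne'
  have : Finite ((Fin 2 → ℤ) ⧸ H) := Nat.finite_of_card_ne_zero (by rw [hcard]; omega)
  have hcover : univ ⊆ H.mkQ '' T ∪ Neg.neg '' (H.mkQ '' T) := by
    rintro x -
    obtain ⟨z, rfl⟩ := Submodule.Quotient.mk_surjective H x
    obtain ⟨w, hw, hzw | hzw⟩ := exists_mem_latticeTriangle_sub_or_add_mem_span he z
    · exact Or.inl ⟨w, hw, (Submodule.Quotient.eq H).mpr (by simpa using H.neg_mem hzw)⟩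
    · refine Or.inr ⟨H.mkQ w, ⟨w, hw, rfl⟩, ?_⟩
      rw [Submodule.mkQ_apply, ← Submodule.Quotient.mk_neg, Submodule.Quotient.eq]
      convert H.neg_mem hzw using 1; abel
  calc ((cross u v).natAbs : ℕ∞) = (univ : Set ((Fin 2 → ℤ) ⧸ H)).encard := by
        rw [encard_univ, ENat.card_eq_coe_natCard, hcard]
    _ ≤ (H.mkQ '' T).encard + (Neg.neg '' (H.mkQ '' T)).encard :=
        (encard_le_encard hcover).trans (encard_union_le _ _)
    _ ≤ T.encard + T.encard :=
        add_le_add (encard_image_le _ _) ((encard_image_le _ _).trans (encard_image_le _ _))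
    _ = 2 * T.encard := (two_mul _).symm

lemma cross_latticePoint (a b : Fin 2 → ℤ) :
    cross (latticePoint a) (latticePoint b) = ((cross a b : ℤ) : ℝ) := by
  simp [cross, latticePoint]

lemma latticePoint_add_mem_of_mem_latticeTriangle {P : Set (Fin 2 → ℝ)} (hP : Convex ℝ P)
    {p u v z : Fin 2 → ℤ} (hp : latticePoint p ∈ P) (hu : latticePoint (p + u) ∈ P)
    (hv : latticePoint (p + v) ∈ P) (he : 0 < cross u v) (hz : z ∈ latticeTriangle u v) :
    latticePoint (p + z) ∈ P := by
  obtain ⟨h₁, h₂, h₃⟩ := hz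
  have he' : (0 : ℝ) < cross u v := by exact_mod_cast he
  set α : ℝ := cross z v / cross u v
  set β : ℝ := cross u z / cross u v
  have hαβ : α + β ≤ 1 := by
    rw [← add_div, div_le_one he']; exact_mod_cast h₃
  have hcomb : latticePoint (p + z) = ∑ i, ![1 - α - β, α, β] i •
      ![latticePoint p, latticePoint (p + u), latticePoint (p + v)] i := by
    funext i
    have hcramer := congrArg (Int.cast : ℤ → ℝ) (congrFun (cross_smul_eq_add u v z) i)
    simp only [Pi.add_apply, Pi.smul_apply, smul_eq_mul, Int.cast_add, Int.cast_mul] at hcramer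
    simp [Fin.sum_univ_three, latticePoint, α, β]
    field_simp
    linear_combination hcramer
  rw [hcomb]
  refine hP.sum_mem (fun i _ => ?_) (by simp [Fin.sum_univ_three]; ring) (fun i _ => ?_)
  · fin_cases i
    · simp only [Fin.zero_eta, Matrix.cons_val_zero]; linarith
    · exact div_nonneg (by exact_mod_cast h₁) he'.le
    · exact div_nonneg (by exact_mod_cast h₂) he'.le
  · fin_cases i <;> simpa

lemma exists_cross_sub_ne_zero {A : Set (Fin 2 → ℝ)}
    (hA : Module.finrank ℝ (vectorSpan ℝ A) = 2) :
    ∃ x ∈ A, ∃ y ∈ A, ∃ z ∈ A, cross (y - x) (z - x) ≠ 0 := by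
  by_contra! h
  obtain ⟨x, hx⟩ : A.Nonempty := by
    rw [nonempty_iff_ne_empty]; rintro rfl; rw [vectorSpan_empty, finrank_bot] at hA; omega
  have htop : vectorSpan ℝ A = ⊤ := Submodule.eq_top_of_finrank_eq (by simpa using hA)
  have hsub : A ⊆ {x} := by
    intro y hy
    let φ : (Fin 2 → ℝ) →ₗ[ℝ] ℝ := (y - x) 0 • LinearMap.proj 1 - (y - x) 1 • LinearMap.proj 0
    have hker : vectorSpan ℝ A ≤ LinearMap.ker φ := by
      rw [vectorSpan_eq_span_vsub_set_right ℝ hx, Submodule.span_le]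
      rintro _ ⟨z, hz, rfl⟩
      simpa [φ, cross] using h x hx y hy z hz
    rw [htop, top_le_iff, LinearMap.ker_eq_top] at hker
    have h₀ := LinearMap.congr_fun hker (Pi.single 0 1)
    have h₁ := LinearMap.congr_fun hker (Pi.single 1 1)
    simp [φ] at h₀ h₁
    funext i; fin_cases i <;> simp <;> linarith
  have hbot := vectorSpan_mono ℝ hsub
  rw [vectorSpan_singleton, le_bot_iff] at hbot
  rw [hbot, finrank_bot] at hA
  omega

/-- Hermite normal form: `U` sends `u` to `(g, 0)` and `v` to `(x mod h, h)`, where `g = gcd u`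
and `g * h = cross u v`. -/
lemma exists_SL_mulVec_mem_Icc {u v : Fin 2 → ℤ} (he : 0 < cross u v) :
    ∃ U : SL(2, ℤ), ∀ i, ((U : Matrix (Fin 2) (Fin 2) ℤ) *ᵥ u) i ∈ Icc 0 (cross u v) ∧
      ((U : Matrix (Fin 2) (Fin 2) ℤ) *ᵥ v) i ∈ Icc 0 (cross u v) := by
  set g : ℤ := (Int.gcd (u 0) (u 1) : ℤ)
  have hu : u 0 ≠ 0 ∨ u 1 ≠ 0 := by
    by_contra! h0; simp [cross, h0.1, h0.2] at he
  have hg : 0 < g := Int.natCast_pos.mpr (Int.gcd_pos_iff.mpr hu)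
  obtain ⟨c₀, hc₀⟩ : g ∣ u 0 := Int.gcd_dvd_left ..
  obtain ⟨c₁, hc₁⟩ : g ∣ u 1 := Int.gcd_dvd_right ..
  set a := Int.gcdA (u 0) (u 1)
  set b := Int.gcdB (u 0) (u 1)
  have hab : a * c₀ + b * c₁ = 1 := by
    have hbez : g = u 0 * a + u 1 * b := Int.gcd_eq_gcd_ab _ _
    refine mul_left_cancel₀ hg.ne' ?_
    linear_combination -a * hc₀ - b * hc₁ - hbez
  set h := c₀ * v 1 - c₁ * v 0
  have hgh : g * h = cross u v := by simp only [h, cross]; linear_combination v 0 * hc₁ - v 1 * hc₀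
  have hh : 0 < h := pos_of_mul_pos_right (hgh ▸ he) hg.le
  set x := a * v 0 + b * v 1
  set k := x / h
  refine ⟨⟨!![a + k * c₁, b - k * c₀; -c₁, c₀], ?_⟩, fun i => ?_⟩
  · rw [det_fin_two_of]; linear_combination hab
  have hUu : (!![a + k * c₁, b - k * c₀; -c₁, c₀] *ᵥ u) = ![g, 0] := by
    funext i; fin_cases i <;> simp [mulVec, dotProduct, Fin.sum_univ_two]
    · linear_combination (a + k * c₁) * hc₀ + (b - k * c₀) * hc₁ + g * hab
    · linear_combination (-c₁) * hc₀ + c₀ * hc₁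
  have hUv : (!![a + k * c₁, b - k * c₀; -c₁, c₀] *ᵥ v) = ![x % h, h] := by
    funext i; fin_cases i <;> simp [mulVec, dotProduct, Fin.sum_univ_two, Int.emod_def, x, k, h]
    all_goals ring
  have hge : g ≤ cross u v := hgh ▸ le_mul_of_one_le_right hg.le hh
  have hhe : h ≤ cross u v := hgh ▸ le_mul_of_one_le_left hh.le hg
  have hx₀ : 0 ≤ x % h := Int.emod_nonneg _ hh.ne'
  have hx₁ : x % h < h := Int.emod_lt_of_pos _ hh
  simp only [hUu, hUv]
  fin_cases i <;> simp <;> omega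

lemma abs_mulVec_le_of_abs_cross_le {U : Matrix (Fin 2) (Fin 2) ℤ} {u v w : Fin 2 → ℤ}
    (he : 0 < cross u v)
    (hU : ∀ i, (U *ᵥ u) i ∈ Icc 0 (cross u v) ∧ (U *ᵥ v) i ∈ Icc 0 (cross u v))
    (hu : |cross u w| ≤ cross u v) (hv : |cross w v| ≤ cross u v) (i : Fin 2) :
    |(U *ᵥ w) i| ≤ 2 * cross u v := by
  set e := cross u v
  obtain ⟨⟨hUu₀, hUu₁⟩, hUv₀, hUv₁⟩ := hU i
  have hcramer : e * (U *ᵥ w) i = cross w v * (U *ᵥ u) i + cross u w * (U *ᵥ v) i := by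
    simpa only [mulVec_add, mulVec_smul, Pi.add_apply, Pi.smul_apply, smul_eq_mul] using
      congrArg (fun y => (U *ᵥ y) i) (cross_smul_eq_add u v w)
  have hbound : e * |(U *ᵥ w) i| ≤ e * (2 * e) :=
    calc e * |(U *ᵥ w) i| = |cross w v * (U *ᵥ u) i + cross u w * (U *ᵥ v) i| := by
          rw [← hcramer, abs_mul, abs_of_pos he]
      _ ≤ |cross w v * (U *ᵥ u) i| + |cross u w * (U *ᵥ v) i| := abs_add_le _ _
      _ = |cross w v| * (U *ᵥ u) i + |cross u w| * (U *ᵥ v) i := by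
          rw [abs_mul, abs_mul, abs_of_nonneg hUu₀, abs_of_nonneg hUv₀]
      _ ≤ e * e + e * e := by gcongr
      _ = e * (2 * e) := by ring
  exact le_of_mul_le_mul_left hbound he

lemma cross_le_two_mul_ncard {P : Set (Fin 2 → ℝ)} (hP : Convex ℝ P)
    (hfin : (latticePoint ⁻¹' P).Finite) {p u v : Fin 2 → ℤ} (hp : latticePoint p ∈ P)
    (hu : latticePoint (p + u) ∈ P) (hv : latticePoint (p + v) ∈ P) (he : 0 < cross u v) :
    cross u v ≤ 2 * (latticePoint ⁻¹' P).ncard := by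
  have hT : (p + ·) '' latticeTriangle u v ⊆ latticePoint ⁻¹' P := by
    rintro _ ⟨z, hz, rfl⟩
    exact latticePoint_add_mem_of_mem_latticeTriangle hP hp hu hv he hz
  have hle : ((cross u v).natAbs : ℕ∞) ≤ 2 * (latticePoint ⁻¹' P).ncard :=
    calc ((cross u v).natAbs : ℕ∞) ≤ 2 * (latticeTriangle u v).encard :=
          natAbs_cross_le_two_mul_encard he
      _ = 2 * ((p + ·) '' latticeTriangle u v).encard := by
          rw [(add_right_injective p).encard_image]
      _ ≤ 2 * (latticePoint ⁻¹' P).ncard := by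
          rw [hfin.cast_ncard_eq]; gcongr
  have hle' : (cross u v).natAbs ≤ 2 * (latticePoint ⁻¹' P).ncard := by exact_mod_cast hle
  omega

lemma exists_SL_abs_le_of_latticePoint_mem {P : Set (Fin 2 → ℝ)} (hP : Convex ℝ P)
    (hfin : (latticePoint ⁻¹' P).Finite)
    (hdim : ∃ a ∈ latticePoint ⁻¹' P, ∃ b ∈ latticePoint ⁻¹' P, ∃ c ∈ latticePoint ⁻¹' P,
      cross (b - a) (c - a) ≠ 0) :
    ∃ (U : SL(2, ℤ)) (t : Fin 2 → ℤ), ∀ z, latticePoint z ∈ P →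
      ∀ i, |((U : Matrix (Fin 2) (Fin 2) ℤ) *ᵥ z + t) i| ≤ 4 * (latticePoint ⁻¹' P).ncard := by
  set A := latticePoint ⁻¹' P
  obtain ⟨a, ha, b, hb, c, hc, habc⟩ := hdim
  obtain ⟨⟨p, q, r⟩, ⟨hp, hq, hr⟩, hmax⟩ := (A ×ˢ A ×ˢ A).exists_max_image
    (fun x => cross (x.2.1 - x.1) (x.2.2 - x.1)) (hfin.prod (hfin.prod hfin))
    ⟨(a, b, c), ha, hb, hc⟩
  set u := q - p
  set v := r - p
  have habs : ∀ a ∈ A, ∀ b ∈ A, ∀ c ∈ A, |cross (b - a) (c - a)| ≤ cross u v := by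
    intro a ha b hb c hc
    have hacb := hmax (a, c, b) ⟨ha, hc, hb⟩
    rw [cross_anticomm] at hacb
    exact abs_le.mpr ⟨by linarith, hmax (a, b, c) ⟨ha, hb, hc⟩⟩
  have he : 0 < cross u v := (abs_pos.mpr habc).trans_le (habs a ha b hb c hc)
  have hcard := cross_le_two_mul_ncard hP hfin hp (by rwa [add_sub_cancel])
    (by rwa [add_sub_cancel]) he
  obtain ⟨U, hU⟩ := exists_SL_mulVec_mem_Icc he
  refine ⟨U, -((U : Matrix (Fin 2) (Fin 2) ℤ) *ᵥ p), fun z hz i => ?_⟩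
  rw [← sub_eq_add_neg, ← mulVec_sub]
  calc _ ≤ 2 * cross u v :=
        abs_mulVec_le_of_abs_cross_le he hU (habs p hp q hq z hz) (habs p hp z hz r hr) i
    _ ≤ _ := by linarith

lemma exists_cross_sub_ne_zero_of_polyDim {V : Set (Fin 2 → ℝ)} (hV : V ⊆ LatticePts 2)
    (hdim : polyDim (convexHull ℝ V) = 2) :
    ∃ a ∈ latticePoint ⁻¹' convexHull ℝ V, ∃ b ∈ latticePoint ⁻¹' convexHull ℝ V,
      ∃ c ∈ latticePoint ⁻¹' convexHull ℝ V, cross (b - a) (c - a) ≠ 0 := by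
  rw [polyDim, affineSpan_convexHull, direction_affineSpan] at hdim
  obtain ⟨x, hx, y, hy, z, hz, hxyz⟩ := exists_cross_sub_ne_zero hdim
  rw [← range_latticePoint] at hV
  obtain ⟨a, rfl⟩ := hV hx
  obtain ⟨b, rfl⟩ := hV hy
  obtain ⟨c, rfl⟩ := hV hz
  refine ⟨a, subset_convexHull ℝ V hx, b, subset_convexHull ℝ V hy, c,
    subset_convexHull ℝ V hz, ?_⟩
  rwa [← latticePoint_sub, ← latticePoint_sub, cross_latticePoint, Int.cast_ne_zero] at hxyz

end LatticePolygon

open LatticePolygon in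
theorem finitely_many_polygons_with_normal_cones_in_family_general (N : ℕ)
    (𝓕 : Set (Set (Fin 2 → ℝ))) :
    ∃ S : Set (Set (Fin 2 → ℝ)), S.Finite ∧
      ∀ P : Set (Fin 2 → ℝ),
        IsLatticePolytope P → polyDim P = 2 →
        (P ∩ LatticePts 2).ncard = N + 1 →
        (∀ u ∈ Set.extremePoints ℝ P, ∃ σ ∈ 𝓕, ConeEquiv (normalCone P u) σ) →
        ∃ Q ∈ S, PolyEquiv P Q := by
  set box : Finset (Fin 2 → ℤ) := Finset.Icc (-fun _ => 4 * (N + 1 : ℤ)) fun _ => 4 * (N + 1 : ℤ)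
  refine ⟨convexHull ℝ '' 𝒫 (latticePoint '' box), (box.finite_toSet.image _).powerset.image _, ?_⟩
  rintro P ⟨V, -, -, hVlat, rfl⟩ hdim hcard -
  have hncard : (latticePoint ⁻¹' convexHull ℝ V).ncard = N + 1 :=
    (ncard_preimage_latticePoint _).trans hcard
  obtain ⟨U, t, hUt⟩ := exists_SL_abs_le_of_latticePoint_mem (convex_convexHull ℝ V)
    (finite_of_ncard_ne_zero (by omega)) (exists_cross_sub_ne_zero_of_polyDim hVlat hdim)
  set f := unimodularAffineEquiv U t
  refine ⟨f '' convexHull ℝ V, ⟨f '' V, ?_, (f.toAffineMap.image_convexHull V).symm⟩,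
    polyEquiv_image (image_latticePts_unimodularAffineEquiv U t) _⟩
  rintro _ ⟨x, hx, rfl⟩
  obtain ⟨z, rfl⟩ := (range_latticePoint (n := 2)).symm ▸ hVlat hx
  refine ⟨_, ?_, (unimodularAffineEquiv_latticePoint U t z).symm⟩
  have hz := hUt z (subset_convexHull ℝ V hx)
  rw [hncard] at hz
  push_cast at hz
  simp only [box, Finset.coe_Icc, mem_Icc, Pi.le_def, Pi.neg_apply]
  exact ⟨fun i => (abs_le.mp (hz i)).1, fun i => (abs_le.mp (hz i)).2⟩

/-- For a fixed nonnegative integer N and a finite family 𝓕 of rational pointed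
2-dimensional cones, there are, up to integral equivalence, only finitely many
lattice polygons with exactly N+1 lattice points all of whose normal cones at
vertices are integrally equivalent to cones of 𝓕. -/
theorem finitely_many_polygons_with_normal_cones_in_family (N : ℕ)
    (𝓕 : Set (Set (Fin 2 → ℝ))) (h𝓕fin : 𝓕.Finite)
    (h𝓕 : ∀ σ ∈ 𝓕, IsRationalCone σ ∧ IsPointedCone σ ∧ coneDim σ = 2) :
    ∃ S : Set (Set (Fin 2 → ℝ)), S.Finite ∧
      ∀ P : Set (Fin 2 → ℝ),
        IsLatticePolytope P → polyDim P = 2 →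
        (P ∩ LatticePts 2).ncard = N + 1 →
        (∀ u ∈ Set.extremePoints ℝ P, ∃ σ ∈ 𝓕, ConeEquiv (normalCone P u) σ) →
        ∃ Q ∈ S, PolyEquiv P Q :=
  finitely_many_polygons_with_normal_cones_in_family_general N 𝓕
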